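/- arXiv:math/0309066 — 4 statements merged into one kernel-verified Lean document; each statement's English description precedes it below -/
import Mathlib

section
/- Any directed path in G_{s,k} from an out-vertex to an in-vertex has length exactly k(k+1)/2. -/
/-- A directed edge of the graph `G_{s,k}`: the tuple `w` is obtained from `v` by replacing
an adjacent pair `(v_p, v_{p+1})` with `v_p < v_{p+1}` by `(v_{p+1} - 1, v_p)`. -/
def CohStep (k : ℕ) (v w : Fin (k + 1) → ℕ) : Prop :=
  ∃ p : Fin k, v p.castSucc < v p.succ ∧
    w p.castSucc = v p.succ - 1 ∧ w p.succ = v p.castSucc ∧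
    ∀ q : Fin (k + 1), q ≠ p.castSucc → q ≠ p.succ → w q = v q

/-!
Every edge lowers the entry sum by one, so the length of a path is the drop of the entry sum
between its endpoints. The edge relation terminates and is locally confluent: steps at distant
positions commute, and steps at adjacent positions are joined by a braid relation. By Newman's
lemma the in-vertex reachable from a vertex is therefore unique. From an out-vertex `v` an explicit
path, which moves `v 0` to the right past the recursively treated tail, reaches the in-vertex
`j ↦ v (rev j) - rev j`, whose entry sum is `∑ v - k (k + 1) / 2`.
-/

namespace Relation

variable {α : Type*} {r : α → α → Prop}

theorem exists_reflTransGen_normal (hwf : WellFounded (flip r)) (a : α) :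
    ∃ b, ReflTransGen r a b ∧ ∀ c, ¬ r b c := by
  induction a using hwf.induction with
  | _ a ih =>
    by_cases h : ∃ b, r a b
    · obtain ⟨b, hab⟩ := h
      obtain ⟨c, hbc, hc⟩ := ih b hab
      exact ⟨c, hbc.head hab, hc⟩
    · exact ⟨a, .refl, not_exists.1 h⟩

theorem newman (hwf : WellFounded (flip r))
    (hlc : ∀ {a b c}, r a b → r a c → Join (ReflTransGen r) b c)
    {a b c : α} (hab : ReflTransGen r a b) (hac : ReflTransGen r a c)
    (hb : ∀ d, ¬ r b d) (hc : ∀ d, ¬ r c d) : b = c := by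
  induction a using hwf.induction generalizing b c with
  | _ a ih =>
    rcases hab.cases_head with rfl | ⟨b₁, hab₁, hb₁b⟩ <;>
      rcases hac.cases_head with rfl | ⟨c₁, hac₁, hc₁c⟩
    · rfl
    · exact absurd hac₁ (hb c₁)
    · exact absurd hab₁ (hc b₁)
    obtain ⟨d, hb₁d, hc₁d⟩ := hlc hab₁ hac₁
    obtain ⟨n, hdn, hn⟩ := exists_reflTransGen_normal hwf d
    rw [ih b₁ hab₁ hb₁b (hb₁d.trans hdn) hb hn,
      ih c₁ hac₁ hc₁c (hc₁d.trans hdn) hc hn]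

end Relation

namespace CohStep

open Relation Finset

variable {k : ℕ}

def stepAt (v : Fin (k + 1) → ℕ) (p : Fin k) : Fin (k + 1) → ℕ :=
  Function.update (Function.update v p.castSucc (v p.succ - 1)) p.succ (v p.castSucc)

theorem iff_exists_stepAt {v w : Fin (k + 1) → ℕ} :
    CohStep k v w ↔ ∃ p, v p.castSucc < v p.succ ∧ w = stepAt v p := by
  have hne (p : Fin k) : p.castSucc ≠ p.succ := Fin.castSucc_lt_succ.ne
  constructor
  · rintro ⟨p, hlt, h₁, h₂, h₃⟩
    refine ⟨p, hlt, funext fun j => ?_⟩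
    by_cases hj₂ : j = p.succ
    · simp [stepAt, hj₂, h₂]
    by_cases hj₁ : j = p.castSucc
    · simp [stepAt, hj₁, h₁, hne]
    simp [stepAt, hj₁, hj₂, h₃ j hj₁ hj₂]
  · rintro ⟨p, hlt, rfl⟩
    exact ⟨p, hlt, by simp [stepAt, hne], by simp [stepAt],
      fun q h₁ h₂ => by simp [stepAt, h₁, h₂]⟩

theorem cohStep_stepAt {v : Fin (k + 1) → ℕ} {p : Fin k} (h : v p.castSucc < v p.succ) :
    CohStep k v (stepAt v p) :=
  iff_exists_stepAt.2 ⟨p, h, rfl⟩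

theorem sum_add_one {v w : Fin (k + 1) → ℕ} (h : CohStep k v w) :
    ∑ j, w j + 1 = ∑ j, v j := by
  obtain ⟨p, hlt, h₁, h₂, h₃⟩ := h
  have hswap : ∀ j, w j + (if j = p.castSucc then 1 else 0)
      = v (Equiv.swap p.castSucc p.succ j) := by
    intro j
    by_cases hj₁ : j = p.castSucc
    · subst hj₁; simp only [if_true, Equiv.swap_apply_left, h₁]; omega
    by_cases hj₂ : j = p.succ
    · subst hj₂; simp [hj₁, h₂]
    simp [hj₁, Equiv.swap_apply_of_ne_of_ne hj₁ hj₂, h₃ j hj₁ hj₂]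
  calc ∑ j, w j + 1 = ∑ j, (w j + if j = p.castSucc then 1 else 0) := by
        simp [sum_add_distrib]
    _ = ∑ j, v j := by
        simp only [hswap]; exact Equiv.sum_comp (Equiv.swap p.castSucc p.succ) v

theorem wellFounded_flip : WellFounded (flip (CohStep k)) :=
  Subrelation.wf (fun {a b} (h : CohStep k b a) =>
      show ∑ j, a j < ∑ j, b j by have := sum_add_one h; omega)
    (measure fun v : Fin (k + 1) → ℕ => ∑ j, v j).wf

theorem stepAt_comm (v : Fin (k + 1) → ℕ) {p q : Fin k} (h : (p : ℕ) + 2 ≤ q) :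
    stepAt (stepAt v p) q = stepAt (stepAt v q) p := by
  funext j
  simp only [stepAt, Function.update_apply, Fin.ext_iff, Fin.val_castSucc, Fin.val_succ]
  split_ifs <;> omega

theorem stepAt_braid (v : Fin (k + 1) → ℕ) {p q : Fin k} (h : (q : ℕ) = p + 1) :
    stepAt (stepAt (stepAt v q) p) q = stepAt (stepAt (stepAt v p) q) p := by
  have e : q.castSucc = p.succ := Fin.ext (by simp [h])
  funext j
  simp only [stepAt, Function.update_apply, Fin.ext_iff, Fin.val_castSucc, Fin.val_succ]
  split_ifs <;> grind

theorem join_stepAt_of_lt {v : Fin (k + 1) → ℕ} {p q : Fin k} (hpq : p < q)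
    (hp : v p.castSucc < v p.succ) (hq : v q.castSucc < v q.succ) :
    Join (ReflTransGen (CohStep k)) (stepAt v p) (stepAt v q) := by
  rcases Nat.lt_or_ge ((p : ℕ) + 1) q with hfar | hnear
  · refine ⟨stepAt (stepAt v p) q, .single (cohStep_stepAt ?_), ?_⟩
    · simp only [stepAt, Function.update_apply, Fin.ext_iff, Fin.val_castSucc, Fin.val_succ]
      split_ifs <;> grind
    rw [stepAt_comm v (by omega : (p : ℕ) + 2 ≤ q)]
    refine .single (cohStep_stepAt ?_)
    simp only [stepAt, Function.update_apply, Fin.ext_iff, Fin.val_castSucc, Fin.val_succ]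
    split_ifs <;> grind
  · have hqp : (q : ℕ) = p + 1 := by have := Fin.lt_def.1 hpq; omega
    have e : q.castSucc = p.succ := Fin.ext (by simp [hqp])
    refine ⟨stepAt (stepAt (stepAt v p) q) p, ?_, ?_⟩
    · refine .head (cohStep_stepAt ?_) (.single (cohStep_stepAt ?_))
      all_goals
        simp only [stepAt, Function.update_apply, Fin.ext_iff, Fin.val_castSucc, Fin.val_succ]
        split_ifs <;> grind
    · rw [← stepAt_braid v hqp]
      refine .head (cohStep_stepAt ?_) (.single (cohStep_stepAt ?_))
      all_goals
        simp only [stepAt, Function.update_apply, Fin.ext_iff, Fin.val_castSucc, Fin.val_succ]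
        split_ifs <;> grind

theorem join_reflTransGen {v w₁ w₂ : Fin (k + 1) → ℕ} (h₁ : CohStep k v w₁)
    (h₂ : CohStep k v w₂) : Join (ReflTransGen (CohStep k)) w₁ w₂ := by
  obtain ⟨p, hp, rfl⟩ := iff_exists_stepAt.1 h₁
  obtain ⟨q, hq, rfl⟩ := iff_exists_stepAt.1 h₂
  rcases lt_trichotomy p q with hpq | rfl | hqp
  · exact join_stepAt_of_lt hpq hp hq
  · exact ⟨_, .refl, .refl⟩
  · obtain ⟨d, hqd, hpd⟩ := join_stepAt_of_lt hqp hq hp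
    exact ⟨d, hpd, hqd⟩

theorem not_of_succ_le {v : Fin (k + 1) → ℕ} (h : ∀ p : Fin k, v p.succ ≤ v p.castSucc)
    (w : Fin (k + 1) → ℕ) : ¬ CohStep k v w :=
  fun ⟨p, hlt, _⟩ => (h p).not_gt hlt

theorem sum_add_of_chain {m : ℕ} {f : ℕ → Fin (k + 1) → ℕ}
    (hstep : ∀ t < m, CohStep k (f t) (f (t + 1))) {t : ℕ} (ht : t ≤ m) :
    ∑ j, f t j + t = ∑ j, f 0 j := by
  induction t with
  | zero => rfl
  | succ t ih =>
    have := (hstep t (by omega)).sum_add_one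
    have := ih (by omega)
    omega

theorem cons {v w : Fin (k + 1) → ℕ} (h : CohStep k v w) (a : ℕ) :
    CohStep (k + 1) (Fin.cons a v) (Fin.cons a w) := by
  obtain ⟨p, hlt, h₁, h₂, h₃⟩ := h
  refine ⟨p.succ, ?_, ?_, ?_, fun q hq₁ hq₂ => ?_⟩
  · simpa [← Fin.succ_castSucc] using hlt
  · simpa [← Fin.succ_castSucc] using h₁
  · simpa using h₂
  · cases q using Fin.cases with
    | zero => rfl
    | succ q =>
      simp only [Fin.cons_succ]
      exact h₃ q (fun h => hq₁ (by simp [h])) (fun h => hq₂ (by simp [h]))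

theorem cons_cons {a b : ℕ} (hab : a < b) (u : Fin k → ℕ) :
    CohStep (k + 1) (Fin.cons a (Fin.cons b u)) (Fin.cons (b - 1) (Fin.cons a u)) := by
  refine ⟨0, by simpa using hab, by simp, by simp, fun q hq₁ hq₂ => ?_⟩
  cases q using Fin.cases with
  | zero => exact absurd rfl hq₁
  | succ q =>
    cases q using Fin.cases with
    | zero => exact absurd rfl hq₂
    | succ q => simp

theorem reflTransGen_cons_snoc {a : ℕ} {t : Fin k → ℕ} (h : ∀ i, a < t i) :
    ReflTransGen (CohStep k) (Fin.cons a t) (Fin.snoc (fun i => t i - 1) a) := by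
  induction k with
  | zero =>
    have : (Fin.cons a t : Fin 1 → ℕ) = Fin.snoc (fun i => t i - 1) a :=
      funext fun i => by fin_cases i; rfl
    rw [this]
  | succ k ih =>
    have hcons : (Fin.cons (t 0 - 1) (fun i => Fin.tail t i - 1) : Fin (k + 1) → ℕ)
        = fun i => t i - 1 := by
      funext i; cases i using Fin.cases <;> rfl
    have hfirst := cons_cons (h 0) (Fin.tail t)
    rw [Fin.cons_self_tail] at hfirst
    rw [← hcons, ← Fin.cons_snoc_eq_snoc_cons]
    exact .head hfirst ((ih fun i => h i.succ).lift _ fun _ _ hvw => hvw.cons _)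

/-- In closed form, `reverseSub k v j = v (rev j) - rev j`. -/
def reverseSub : (k : ℕ) → (Fin (k + 1) → ℕ) → Fin (k + 1) → ℕ
  | 0, v => v
  | k + 1, v => Fin.snoc (fun i => reverseSub k (Fin.tail v) i - 1) (v 0)

theorem le_reverseSub {v : Fin (k + 1) → ℕ} (hv : StrictMono v) (i : Fin (k + 1)) :
    v 0 ≤ reverseSub k v i := by
  induction k with
  | zero => fin_cases i; rfl
  | succ k ih =>
    cases i using Fin.lastCases with
    | last => simp [reverseSub]
    | cast i =>
      have h₀ : v 0 < Fin.tail v 0 := hv (Fin.succ_pos 0)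
      have := ih (v := Fin.tail v) (hv.comp Fin.strictMono_succ) i
      simp only [reverseSub, Fin.snoc_castSucc]
      omega

theorem reverseSub_succ_le {v : Fin (k + 1) → ℕ} (hv : StrictMono v) (p : Fin k) :
    reverseSub k v p.succ ≤ reverseSub k v p.castSucc := by
  induction k with
  | zero => exact p.elim0
  | succ k ih =>
    have h₀ : v 0 < Fin.tail v 0 := hv (Fin.succ_pos 0)
    cases p using Fin.lastCases with
    | last =>
      have := le_reverseSub (v := Fin.tail v) (hv.comp Fin.strictMono_succ) (Fin.last k)
      simp only [reverseSub, Fin.succ_last, Fin.snoc_last, Fin.snoc_castSucc]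
      omega
    | cast p =>
      have := ih (v := Fin.tail v) (hv.comp Fin.strictMono_succ) p
      simp only [reverseSub, Fin.succ_castSucc, Fin.snoc_castSucc]
      omega

theorem sum_reverseSub_add {v : Fin (k + 1) → ℕ} (hv : StrictMono v) :
    ∑ j, reverseSub k v j + ∑ i ∈ range (k + 1), i = ∑ j, v j := by
  induction k with
  | zero => simp [reverseSub]
  | succ k ih =>
    have h₀ : v 0 < Fin.tail v 0 := hv (Fin.succ_pos 0)
    have hpos : ∀ i, 1 ≤ reverseSub k (Fin.tail v) i := fun i =>
      (le_reverseSub (v := Fin.tail v) (hv.comp Fin.strictMono_succ) i).trans' (by omega)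
    have hsub : ∑ i, (reverseSub k (Fin.tail v) i - 1) + (k + 1)
        = ∑ i, reverseSub k (Fin.tail v) i :=
      calc ∑ i, (reverseSub k (Fin.tail v) i - 1) + (k + 1)
          = ∑ i, (reverseSub k (Fin.tail v) i - 1 + 1) := by simp [sum_add_distrib]
        _ = ∑ i, reverseSub k (Fin.tail v) i :=
          sum_congr rfl fun i _ => Nat.sub_add_cancel (hpos i)
    have := ih (v := Fin.tail v) (hv.comp Fin.strictMono_succ)
    rw [reverseSub, Fin.sum_univ_castSucc, Fin.sum_univ_succ (f := v), sum_range_succ]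
    simp only [Fin.snoc_castSucc, Fin.snoc_last]
    simp only [Fin.tail] at this hsub
    omega

theorem reflTransGen_reverseSub {v : Fin (k + 1) → ℕ} (hv : StrictMono v) :
    ReflTransGen (CohStep k) v (reverseSub k v) := by
  induction k with
  | zero => exact .refl
  | succ k ih =>
    have h₀ : v 0 < Fin.tail v 0 := hv (Fin.succ_pos 0)
    have hlt : ∀ i, v 0 < reverseSub k (Fin.tail v) i := fun i =>
      h₀.trans_le (le_reverseSub (v := Fin.tail v) (hv.comp Fin.strictMono_succ) i)
    conv_lhs => rw [← Fin.cons_self_tail v]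
    exact ((ih (v := Fin.tail v) (hv.comp Fin.strictMono_succ)).lift _
      fun _ _ h => h.cons _).trans (reflTransGen_cons_snoc hlt)

end CohStep

open CohStep Relation Finset in
theorem stmt3_general (k : ℕ) (m : ℕ)
    (f : ℕ → Fin (k + 1) → ℕ)
    (hstep : ∀ t < m, CohStep k (f t) (f (t + 1)))
    (hout : StrictMono (f 0))
    (hin : ∀ p : Fin k, f m p.succ ≤ f m p.castSucc) :
    2 * m = k * (k + 1) := by
  have hpath : ReflTransGen (CohStep k) (f 0) (f m) :=
    (reflTransGen_of_succ_of_le (fun i j => CohStep k (f i) (f j))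
      (fun i hi => hstep i hi.2) m.zero_le).lift f fun _ _ h => h
  have hnf : f m = reverseSub k (f 0) :=
    newman wellFounded_flip join_reflTransGen hpath (reflTransGen_reverseSub hout)
      (not_of_succ_le hin) (not_of_succ_le (reverseSub_succ_le hout))
  have hsum := sum_add_of_chain hstep le_rfl
  have hrev := sum_reverseSub_add hout
  have hgauss := sum_range_id_mul_two (k + 1)
  rw [hnf] at hsum
  rw [Nat.add_sub_cancel, Nat.mul_comm (k + 1)] at hgauss
  omega

/-- Any directed path in `G_{s,k}` from an out-vertex (strictly increasing tuple) to an
in-vertex (weakly decreasing tuple) has length exactly `k(k+1)/2`. -/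
theorem stmt3 (s k : ℕ) (hs : 1 ≤ s) (hk : 1 ≤ k) (m : ℕ)
    (f : ℕ → Fin (k + 1) → ℕ)
    (hbound : ∀ t ≤ m, ∀ j : Fin (k + 1), f t j ≤ s + (j : ℕ))
    (hstep : ∀ t < m, CohStep k (f t) (f (t + 1)))
    (hout : StrictMono (f 0))
    (hin : ∀ p : Fin k, f m p.succ ≤ f m p.castSucc) :
    2 * m = k * (k + 1) :=
  stmt3_general k m f hstep hout hin
end

section
/- The graph G_{s,k} has exactly binomial(s+k+1, k+1) connected components. -/
/-- The vertex set of `G_{s,k}`. -/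
def GskVertex (s k : ℕ) : Type :=
  {v : Fin (k + 1) → ℕ // ∀ j : Fin (k + 1), v j ≤ s + (j : ℕ)}

/-- The (undirected) graph `G_{s,k}`. -/
def Gsk (s k : ℕ) : SimpleGraph (GskVertex s k) :=
  SimpleGraph.fromRel (fun v w => CohStep k v.1 w.1)

def shiftInsert (x : ℕ) : List ℕ → List ℕ
  | [] => [x]
  | m :: M => if x < m then x :: m :: M else m :: shiftInsert (x + 1) M

def shiftSort (l : List ℕ) : List ℕ := l.foldr shiftInsert []

theorem shiftInsert_shiftInsert_of_lt (M : List ℕ) {a b : ℕ} (h : a < b) :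
    shiftInsert a (shiftInsert b M) = shiftInsert (b - 1) (shiftInsert a M) := by
  induction M generalizing a b with
  | nil => simp [shiftInsert, h, show ¬ b - 1 < a by omega, show b - 1 + 1 = b by omega]
  | cons m M ih =>
    have ih' := ih (show a + 1 < b + 1 by omega)
    rw [show b + 1 - 1 = b - 1 + 1 by omega] at ih'
    by_cases hbm : b < m <;> by_cases ham : a < m <;> by_cases hb1m : b - 1 < m <;>
      simp [shiftInsert, *, show b - 1 + 1 = b by omega] <;> omega

theorem shiftSort_of_pairwise_lt {l : List ℕ} (hl : l.Pairwise (· < ·)) : shiftSort l = l := by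
  induction l with
  | nil => rfl
  | cons x l ih =>
    rw [shiftSort, List.foldr_cons, ← shiftSort, ih hl.of_cons]
    cases l with
    | nil => rfl
    | cons m M => simp [shiftInsert, List.rel_of_pairwise_cons hl List.mem_cons_self]

theorem shiftSort_append_cons_cons (L R : List ℕ) {a b : ℕ} (h : a < b) :
    shiftSort (L ++ (b - 1) :: a :: R) = shiftSort (L ++ a :: b :: R) := by
  simp only [shiftSort, List.foldr_append, List.foldr_cons, shiftInsert_shiftInsert_of_lt _ h]

theorem List.eq_take_append_cons_cons_drop {α : Type*} (l : List α) {p : ℕ}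
    (h : p + 1 < l.length) : l = l.take p ++ l[p] :: l[p + 1] :: l.drop (p + 2) := by
  conv_lhs => rw [← List.take_append_drop p l]
  rw [List.drop_eq_getElem_cons (by omega), List.drop_eq_getElem_cons h]

theorem CohStep.ne {k : ℕ} {v w : Fin (k + 1) → ℕ} (h : CohStep k v w) : v ≠ w := by
  rintro rfl
  obtain ⟨p, hlt, -, hw, -⟩ := h
  exact hlt.ne' hw

theorem CohStep.shiftSort_ofFn_eq {k : ℕ} {v w : Fin (k + 1) → ℕ} (h : CohStep k v w) :
    shiftSort (List.ofFn w) = shiftSort (List.ofFn v) := by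
  obtain ⟨p, hlt, hw₀, hw₁, hw⟩ := h
  have htake : (List.ofFn w).take p = (List.ofFn v).take p := by
    refine List.ext_getElem (by simp) fun i hi _ => ?_
    simp only [List.length_take, List.length_ofFn] at hi
    simp only [List.getElem_take, List.getElem_ofFn]
    exact hw _ (Fin.ne_of_val_ne (by simp; omega)) (Fin.ne_of_val_ne (by simp; omega))
  have hdrop : (List.ofFn w).drop (p + 2) = (List.ofFn v).drop (p + 2) := by
    refine List.ext_getElem (by simp) fun i _ _ => ?_
    simp only [List.getElem_drop, List.getElem_ofFn]
    exact hw _ (Fin.ne_of_val_ne (by simp; omega)) (Fin.ne_of_val_ne (by simp; omega))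
  rw [List.eq_take_append_cons_cons_drop (List.ofFn w) (p := p) (by simp),
    List.eq_take_append_cons_cons_drop (List.ofFn v) (p := p) (by simp), htake, hdrop]
  simp only [List.getElem_ofFn]
  exact (congrArg₂ (fun x y => shiftSort (_ ++ x :: y :: _)) hw₀ hw₁).trans
    (shiftSort_append_cons_cons _ _ hlt)

theorem SimpleGraph.Reachable.apply_eq_of_adj {V β : Type*} {G : SimpleGraph V} {f : V → β}
    (hf : ∀ x y, G.Adj x y → f x = f y) {x y : V} (h : G.Reachable x y) : f x = f y := by
  rw [SimpleGraph.reachable_iff_reflTransGen] at h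
  induction h with
  | refl => rfl
  | tail _ hadj ih => exact ih.trans (hf _ _ hadj)

theorem Fin.le_add_of_strictMono {n c : ℕ} {f : Fin (n + 1) → ℕ} (hf : StrictMono f)
    (hlast : f (Fin.last n) ≤ c + n) (j : Fin (n + 1)) : f j ≤ c + j := by
  induction j using Fin.reverseInduction with
  | last => simpa using hlast
  | cast i ih =>
    have := hf i.castSucc_lt_succ
    simp only [Fin.val_succ, Fin.val_castSucc] at ih ⊢
    omega

def Fin.strictMonoEquivFinsetCard (α : Type*) [LinearOrder α] (r : ℕ) :
    {f : Fin r → α // StrictMono f} ≃ {t : Finset α // t.card = r} where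
  toFun f := ⟨Finset.univ.image f.1, by simp [Finset.card_image_of_injective _ f.2.injective]⟩
  invFun t := ⟨t.1.orderEmbOfFin t.2, (t.1.orderEmbOfFin t.2).strictMono⟩
  left_inv f := Subtype.ext <| (Finset.orderEmbOfFin_unique _
    (fun x => Finset.mem_image_of_mem _ (Finset.mem_univ x)) f.2).symm
  right_inv t := Subtype.ext <| Finset.coe_injective <| by simp

namespace Gsk

variable {s k : ℕ}

theorem adj_of_cohStep {u v : GskVertex s k} (h : CohStep k u.1 v.1) : (Gsk s k).Adj u v :=
  (SimpleGraph.fromRel_adj _ _ _).2 ⟨fun e => h.ne (congrArg Subtype.val e), Or.inl h⟩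

theorem shiftSort_eq_of_reachable {u v : GskVertex s k} (h : (Gsk s k).Reachable u v) :
    shiftSort (List.ofFn u.1) = shiftSort (List.ofFn v.1) := by
  refine h.apply_eq_of_adj (f := fun x => shiftSort (List.ofFn x.1)) fun x y hxy => ?_
  rcases ((SimpleGraph.fromRel_adj _ _ _).1 hxy).2 with hxy | hyx
  exacts [hxy.shiftSort_ofFn_eq.symm, hyx.shiftSort_ofFn_eq]

theorem eq_of_reachable_of_strictMono {u v : GskVertex s k} (hu : StrictMono u.1)
    (hv : StrictMono v.1) (h : (Gsk s k).Reachable u v) : u = v := by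
  have := shiftSort_eq_of_reachable h
  rw [shiftSort_of_pairwise_lt (List.pairwise_ofFn.2 hu),
    shiftSort_of_pairwise_lt (List.pairwise_ofFn.2 hv)] at this
  exact Subtype.ext (List.ofFn_injective this)

theorem exists_cohStep_sum_lt (v : GskVertex s k) (hv : ¬ StrictMono v.1) :
    ∃ u : GskVertex s k, CohStep k u.1 v.1 ∧ ∑ j, v.1 j < ∑ j, u.1 j := by
  obtain ⟨p, hp⟩ : ∃ p : Fin k, v.1 p.succ ≤ v.1 p.castSucc := by
    simpa [Fin.strictMono_iff_lt_succ] using hv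
  have hne : p.castSucc ≠ p.succ := p.castSucc_lt_succ.ne
  set u := v.1 ∘ Equiv.swap p.castSucc p.succ + Pi.single p.succ 1
  have hu₀ : u p.castSucc = v.1 p.succ := by simp [u, hne]
  have hu₁ : u p.succ = v.1 p.castSucc + 1 := by simp [u]
  have hu : ∀ q, q ≠ p.castSucc → q ≠ p.succ → u q = v.1 q := by
    intro q h₀ h₁
    simp [u, Equiv.swap_apply_of_ne_of_ne h₀ h₁, h₁]
  have hbound : ∀ j : Fin (k + 1), u j ≤ s + j := by
    intro j
    have := v.2 p.castSucc
    by_cases h₀ : j = p.castSucc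
    · subst h₀; omega
    by_cases h₁ : j = p.succ
    · subst h₁; simp only [Fin.val_succ, Fin.val_castSucc] at this ⊢; omega
    · exact hu j h₀ h₁ ▸ v.2 j
  refine ⟨⟨u, hbound⟩, ⟨p, ?_, ?_, hu₀.symm, fun q h₀ h₁ => (hu q h₀ h₁).symm⟩, ?_⟩
  · change u p.castSucc < u p.succ
    omega
  · change v.1 p.castSucc = u p.succ - 1
    omega
  simp [u, Finset.sum_add_distrib, Equiv.sum_comp]

theorem exists_strictMono_reachable (v : GskVertex s k) :
    ∃ u : GskVertex s k, StrictMono u.1 ∧ (Gsk s k).Reachable u v := by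
  by_cases hv : StrictMono v.1
  · exact ⟨v, hv, .rfl⟩
  obtain ⟨u, huv, -⟩ := exists_cohStep_sum_lt v hv
  obtain ⟨w, hw, hwu⟩ := exists_strictMono_reachable u
  exact ⟨w, hw, hwu.trans (adj_of_cohStep huv).reachable⟩
termination_by ∑ j : Fin (k + 1), (s + j : ℕ) - ∑ j, v.1 j
decreasing_by
  have := Finset.sum_le_sum fun j (_ : j ∈ Finset.univ) => u.2 j
  omega

theorem bijective_connectedComponentMk_strictMono :
    Function.Bijective fun u : {u : GskVertex s k // StrictMono u.1} =>
      (Gsk s k).connectedComponentMk u.1 := by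
  refine ⟨fun u v huv => Subtype.ext ?_, fun c => ?_⟩
  · exact eq_of_reachable_of_strictMono u.2 v.2 (SimpleGraph.ConnectedComponent.exact huv)
  · induction c using SimpleGraph.ConnectedComponent.ind with | h v => ?_
    obtain ⟨u, hu, huv⟩ := exists_strictMono_reachable v
    exact ⟨⟨u, hu⟩, SimpleGraph.ConnectedComponent.sound huv⟩

def strictMonoEquiv (s k : ℕ) :
    {u : GskVertex s k // StrictMono u.1} ≃ {f : Fin (k + 1) → Fin (s + k + 1) // StrictMono f} where
  toFun u := ⟨fun j => ⟨u.1.1 j, by have := u.1.2 j; omega⟩, fun _ _ h => u.2 h⟩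
  invFun f := ⟨⟨fun j => f.1 j, Fin.le_add_of_strictMono (Fin.val_strictMono.comp f.2)
    (by have := (f.1 (Fin.last k)).2; omega)⟩, Fin.val_strictMono.comp f.2⟩
  left_inv _ := rfl
  right_inv _ := rfl

end Gsk

theorem stmt6_general (s k : ℕ) :
    Nat.card (Gsk s k).ConnectedComponent = (s + k + 1).choose (k + 1) := by
  rw [← Nat.card_eq_of_bijective _ Gsk.bijective_connectedComponentMk_strictMono,
    Nat.card_congr ((Gsk.strictMonoEquiv s k).trans (Fin.strictMonoEquivFinsetCard _ _)),
    Nat.card_eq_fintype_card, Fintype.card_finset_len, Fintype.card_fin]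

/-- The graph `G_{s,k}` has exactly `binomial(s+k+1, k+1)` connected components. -/
theorem stmt6 (s k : ℕ) (hs : 1 ≤ s) (hk : 1 ≤ k) :
    Nat.card (Gsk s k).ConnectedComponent = (s + k + 1).choose (k + 1) :=
  stmt6_general s k
end

section
/- The connected component of the out-vertex (1, 2, ..., k+1) in the graph G_{1,k} is isomorphic to the Cayley graph of the symmetric group S_{k+1} with respect to the generating set of adjacent transpositions {(1 2), (2 3), ..., (k k+1)}. -/
/-- The out-vertex `(1, 2, …, k+1)` of `G_{1,k}`. -/
def outVertex (k : ℕ) : GskVertex 1 k :=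
  ⟨fun j => (j : ℕ) + 1, fun j => by show (j : ℕ) + 1 ≤ 1 + (j : ℕ); omega⟩

/-- The Cayley graph of the symmetric group `S_{k+1}` with respect to the adjacent
transpositions: `σ` and `σ·(i, i+1)` are joined by an edge. -/
def CayleyAdj (k : ℕ) : SimpleGraph (Equiv.Perm (Fin (k + 1))) :=
  SimpleGraph.fromRel (fun σ τ => ∃ i : Fin k, τ = σ * Equiv.swap i.castSucc i.succ)

open Finset Equiv

section Rank

variable {α : Type*} [LinearOrder α]

theorem card_filter_lt_insert {A : Finset α} {a : α} (ha : a ∉ A) (b : α) :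
    #{x ∈ insert a A | x < b} = #{x ∈ A | x < b} + if a < b then 1 else 0 := by
  rw [filter_insert]
  split_ifs with hab
  · exact card_insert_of_notMem (fun h => ha (mem_filter.1 h).1)
  · rfl

theorem card_filter_lt_le_of_le (T : Finset α) {a b : α} (hab : a ≤ b) :
    #{x ∈ T | x < a} ≤ #{x ∈ T | x < b} :=
  card_le_card (monotone_filter_right T fun _ _ hx => hx.trans_le hab)

theorem eq_of_card_filter_lt_eq {T : Finset α} {x y : α} (hx : x ∈ T) (hy : y ∈ T)
    (h : #{z ∈ T | z < x} = #{z ∈ T | z < y}) : x = y := by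
  have key : ∀ {x y : α}, x ∈ T → x < y → #{z ∈ T | z < x} < #{z ∈ T | z < y} := by
    intro x y hx hxy
    refine card_lt_card ⟨fun z hz => ?_, fun hsub => ?_⟩
    · rw [mem_filter] at hz ⊢
      exact ⟨hz.1, hz.2.trans hxy⟩
    · exact lt_irrefl x (mem_filter.1 (hsub (mem_filter.2 ⟨hx, hxy⟩))).2
  rcases lt_trichotomy x y with hxy | rfl | hxy
  · exact absurd h (key hx hxy).ne
  · rfl
  · exact absurd h (key hy hxy).ne'

end Rank

namespace Fin

variable {k : ℕ}

theorem Iio_succ_eq_insert (p : Fin k) : Iio p.succ = insert p.castSucc (Iio p.castSucc) := by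
  ext i
  simp only [mem_Iio, mem_insert, Fin.lt_def, Fin.ext_iff, Fin.val_succ, Fin.val_castSucc]
  omega

theorem swap_castSucc_succ_lt_iff {p : Fin k} {q : Fin (k + 1)} (hq : q ≠ p.succ)
    (i : Fin (k + 1)) : swap p.castSucc p.succ i < q ↔ i < q := by
  have hp : p.castSucc < q ↔ p.succ < q := by
    have := Fin.val_ne_of_ne hq
    simp only [Fin.lt_def, Fin.val_succ, Fin.val_castSucc] at this ⊢
    omega
  rcases eq_or_ne i p.castSucc with rfl | hi
  · rw [swap_apply_left, hp]
  rcases eq_or_ne i p.succ with rfl | hi'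
  · rw [swap_apply_right, hp]
  · rw [swap_apply_of_ne_of_ne hi hi']

end Fin

section Code

variable {k : ℕ}

/-- The vertex of `G_{1,k}` that the map `Φ` sends to `σ`. -/
def permCode (σ : Perm (Fin (k + 1))) (j : Fin (k + 1)) : ℕ :=
  1 + #{x ∈ (Iio j).image σ | x < σ j}

theorem permCode_le (σ : Perm (Fin (k + 1))) (j : Fin (k + 1)) : permCode σ j ≤ 1 + j := by
  have := (card_filter_le ((Iio j).image σ) (· < σ j)).trans card_image_le
  rw [Fin.card_Iio] at this
  unfold permCode
  omega

theorem permCode_one :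
    permCode (1 : Perm (Fin (k + 1))) = fun j : Fin (k + 1) => (j : ℕ) + 1 := by
  funext j
  simp [permCode, add_comm]

variable (σ : Perm (Fin (k + 1))) (p : Fin k)

theorem image_mul_swap_Iio {q : Fin (k + 1)} (hq : q ≠ p.succ) :
    (Iio q).image (σ * swap p.castSucc p.succ) = (Iio q).image σ := by
  have : (Iio q).image (swap p.castSucc p.succ) = Iio q := by
    ext i
    simp only [mem_image, mem_Iio]
    constructor
    · rintro ⟨j, hj, rfl⟩
      exact (Fin.swap_castSucc_succ_lt_iff hq j).2 hj
    · exact fun hi => ⟨_, (Fin.swap_castSucc_succ_lt_iff hq i).2 hi, swap_apply_self ..⟩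
  rw [Perm.coe_mul, ← image_image, this]

theorem permCode_mul_swap_of_ne {q : Fin (k + 1)} (hq : q ≠ p.castSucc) (hq' : q ≠ p.succ) :
    permCode (σ * swap p.castSucc p.succ) q = permCode σ q := by
  rw [permCode, permCode, image_mul_swap_Iio σ p hq', Perm.mul_apply,
    swap_apply_of_ne_of_ne hq hq']

theorem permCode_mul_swap_castSucc :
    permCode (σ * swap p.castSucc p.succ) p.castSucc =
      1 + #{x ∈ (Iio p.castSucc).image σ | x < σ p.succ} := by
  rw [permCode, image_mul_swap_Iio σ p Fin.castSucc_lt_succ.ne, Perm.mul_apply, swap_apply_left]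

theorem permCode_succ :
    permCode σ p.succ = 1 + #{x ∈ (Iio p.castSucc).image σ | x < σ p.succ} +
      if σ p.castSucc < σ p.succ then 1 else 0 := by
  have hnot : σ p.castSucc ∉ (Iio p.castSucc).image σ := by simp
  rw [permCode, Fin.Iio_succ_eq_insert, image_insert, card_filter_lt_insert hnot, add_assoc]

theorem permCode_mul_swap_succ :
    permCode (σ * swap p.castSucc p.succ) p.succ =
      permCode σ p.castSucc + if σ p.succ < σ p.castSucc then 1 else 0 := by
  rw [permCode_succ, image_mul_swap_Iio σ p Fin.castSucc_lt_succ.ne]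
  simp only [Perm.mul_apply, swap_apply_left, swap_apply_right]
  rfl

theorem permCode_castSucc_lt_succ_iff :
    permCode σ p.castSucc < permCode σ p.succ ↔ σ p.castSucc < σ p.succ := by
  rw [permCode_succ, permCode]
  constructor
  · intro h
    by_contra hge
    rw [if_neg hge] at h
    have := card_filter_lt_le_of_le ((Iio p.castSucc).image σ) (not_lt.1 hge)
    omega
  · intro h
    rw [if_pos h]
    have := card_filter_lt_le_of_le ((Iio p.castSucc).image σ) h.le
    omega

def permVertex (σ : Perm (Fin (k + 1))) : GskVertex 1 k :=
  ⟨permCode σ, permCode_le σ⟩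

theorem permVertex_one : permVertex (1 : Perm (Fin (k + 1))) = outVertex k :=
  Subtype.ext permCode_one

end Code

section Step

variable {k : ℕ}

/-- An edge of laterality `p`: `CohStep k v w` unfolds to `∃ p, CohStepAt k p v w`. -/
def CohStepAt (k : ℕ) (p : Fin k) (v w : Fin (k + 1) → ℕ) : Prop :=
  v p.castSucc < v p.succ ∧ w p.castSucc = v p.succ - 1 ∧ w p.succ = v p.castSucc ∧
    ∀ q : Fin (k + 1), q ≠ p.castSucc → q ≠ p.succ → w q = v q

namespace CohStepAt

variable {p : Fin k} {u v w : Fin (k + 1) → ℕ}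

theorem cohStep (h : CohStepAt k p v w) : CohStep k v w := ⟨p, h⟩

theorem ne (h : CohStepAt k p v w) : v ≠ w := fun hvw => by
  have := h.2.2.1
  rw [← hvw] at this
  exact h.1.ne' this

theorem succ_le_castSucc (h : CohStepAt k p v w) : w p.succ ≤ w p.castSucc := by
  have := h.1
  rw [h.2.1, h.2.2.1]
  omega

theorem right_unique (h : CohStepAt k p v w) (h' : CohStepAt k p v u) : w = u := by
  obtain ⟨-, hcs, hs, hrest⟩ := h
  obtain ⟨-, hcs', hs', hrest'⟩ := h'
  funext q
  by_cases hq : q = p.castSucc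
  · rw [hq, hcs, hcs']
  by_cases hq' : q = p.succ
  · rw [hq', hs, hs']
  rw [hrest q hq hq', hrest' q hq hq']

theorem left_unique (h : CohStepAt k p v w) (h' : CohStepAt k p u w) : v = u := by
  obtain ⟨hlt, hcs, hs, hrest⟩ := h
  obtain ⟨hlt', hcs', hs', hrest'⟩ := h'
  funext q
  by_cases hq : q = p.castSucc
  · rw [hq, ← hs, ← hs']
  by_cases hq' : q = p.succ
  · rw [hq']
    omega
  rw [← hrest q hq hq', ← hrest' q hq hq']

end CohStepAt

variable (σ : Perm (Fin (k + 1))) (p : Fin k)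

theorem cohStepAt_permCode_mul_swap (h : σ p.castSucc < σ p.succ) :
    CohStepAt k p (permCode σ) (permCode (σ * swap p.castSucc p.succ)) := by
  have hsucc := permCode_succ σ p
  have hswap := permCode_mul_swap_succ σ p
  rw [if_pos h] at hsucc
  rw [if_neg (lt_asymm h)] at hswap
  refine ⟨(permCode_castSucc_lt_succ_iff σ p).2 h, ?_, by omega,
    fun q hq hq' => permCode_mul_swap_of_ne σ p hq hq'⟩
  rw [permCode_mul_swap_castSucc]
  omega

theorem eq_permCode_mul_swap_of_cohStepAt_from_permCode {w : Fin (k + 1) → ℕ}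
    (h : CohStepAt k p (permCode σ) w) : w = permCode (σ * swap p.castSucc p.succ) :=
  h.right_unique <| cohStepAt_permCode_mul_swap σ p <|
    (permCode_castSucc_lt_succ_iff σ p).1 h.1

theorem eq_permCode_mul_swap_of_cohStepAt_to_permCode {w : Fin (k + 1) → ℕ}
    (h : CohStepAt k p w (permCode σ)) : w = permCode (σ * swap p.castSucc p.succ) := by
  have hlt : σ p.succ < σ p.castSucc :=
    lt_of_le_of_ne
      (not_lt.1 <| (permCode_castSucc_lt_succ_iff σ p).not.1 (not_lt.2 h.succ_le_castSucc))
      (σ.injective.ne Fin.castSucc_lt_succ.ne')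
  have := cohStepAt_permCode_mul_swap (σ * swap p.castSucc p.succ) p (by simpa using hlt)
  rw [mul_swap_mul_self] at this
  exact h.left_unique this

end Step

section Injective

variable {k : ℕ}

theorem image_Iic_subset_of_eqOn_Ioi {σ τ : Perm (Fin (k + 1))} {j : Fin (k + 1)}
    (h : ∀ i, j < i → σ i = τ i) : (Iic j).image σ ⊆ (Iic j).image τ := by
  intro x hx
  obtain ⟨i, hi, rfl⟩ := mem_image.1 hx
  refine mem_image.2 ⟨τ.symm (σ i), mem_Iic.2 ?_, τ.apply_symm_apply _⟩
  by_contra hlt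
  have := h _ (not_le.1 hlt)
  rw [τ.apply_symm_apply, σ.injective.eq_iff] at this
  rw [this] at hlt
  exact hlt (mem_Iic.1 hi)

theorem permCode_eq_card_image_Iic (σ : Perm (Fin (k + 1))) (j : Fin (k + 1)) :
    permCode σ j = 1 + #{x ∈ (Iic j).image σ | x < σ j} := by
  have hnot : σ j ∉ (Iio j).image σ := by simp
  rw [permCode, ← Iio_insert, image_insert, card_filter_lt_insert hnot, if_neg (lt_irrefl _),
    add_zero]

theorem permCode_injective : Function.Injective (permCode (k := k)) := by
  intro σ τ h
  by_contra hne
  obtain ⟨i₀, hi₀⟩ : ∃ i, σ i ≠ τ i := not_forall.1 fun h' => hne (Equiv.ext h')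
  obtain ⟨j, hj, hmax⟩ :=
    exists_max_image {i | σ i ≠ τ i} id ⟨i₀, by simpa using hi₀⟩
  have hagree : ∀ i, j < i → σ i = τ i := fun i hji =>
    by_contra fun hi => (hmax i (by simpa using hi)).not_gt hji
  have hT : (Iic j).image σ = (Iic j).image τ :=
    (image_Iic_subset_of_eqOn_Ioi hagree).antisymm
      (image_Iic_subset_of_eqOn_Ioi fun i hi => (hagree i hi).symm)
  have hcode := congrFun h j
  rw [permCode_eq_card_image_Iic, permCode_eq_card_image_Iic, hT] at hcode
  have hmem : ∀ ρ : Perm (Fin (k + 1)), ρ j ∈ (Iic j).image ρ :=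
    fun ρ => mem_image_of_mem ρ (mem_Iic.2 le_rfl)
  exact (mem_filter.1 hj).2 <| eq_of_card_filter_lt_eq (hT ▸ hmem σ) (hmem τ) (by omega)

end Injective

section Graph

variable {k : ℕ}

theorem permVertex_injective : Function.Injective (permVertex (k := k)) :=
  fun _ _ h => permCode_injective (congrArg Subtype.val h)

theorem gsk_adj_permVertex_iff {σ : Perm (Fin (k + 1))} {w : GskVertex 1 k} :
    (Gsk 1 k).Adj (permVertex σ) w ↔
      ∃ p : Fin k, w = permVertex (σ * swap p.castSucc p.succ) := by
  rw [Gsk, SimpleGraph.fromRel_adj]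
  constructor
  · rintro ⟨-, ⟨p, hp⟩ | ⟨p, hp⟩⟩
    · exact ⟨p, Subtype.ext (eq_permCode_mul_swap_of_cohStepAt_from_permCode σ p hp)⟩
    · exact ⟨p, Subtype.ext (eq_permCode_mul_swap_of_cohStepAt_to_permCode σ p hp)⟩
  · rintro ⟨p, rfl⟩
    rcases lt_or_gt_of_ne (σ.injective.ne (Fin.castSucc_lt_succ (i := p)).ne) with hlt | hgt
    · have h := cohStepAt_permCode_mul_swap σ p hlt
      exact ⟨fun he => h.ne (congrArg Subtype.val he), Or.inl h.cohStep⟩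
    · have h := cohStepAt_permCode_mul_swap (σ * swap p.castSucc p.succ) p
        (by simpa using hgt)
      rw [mul_swap_mul_self] at h
      exact ⟨fun he => h.ne (congrArg Subtype.val he).symm, Or.inr h.cohStep⟩

theorem cayleyAdj_iff {σ τ : Perm (Fin (k + 1))} :
    (CayleyAdj k).Adj σ τ ↔ ∃ p : Fin k, τ = σ * swap p.castSucc p.succ := by
  rw [CayleyAdj, SimpleGraph.fromRel_adj]
  constructor
  · rintro ⟨-, ⟨p, hp⟩ | ⟨p, rfl⟩⟩
    · exact ⟨p, hp⟩
    · exact ⟨p, (mul_swap_mul_self _ _ _).symm⟩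
  · rintro ⟨p, rfl⟩
    refine ⟨fun h => ?_, Or.inl ⟨p, rfl⟩⟩
    rw [left_eq_mul, swap_eq_one_iff] at h
    exact Fin.castSucc_lt_succ.ne h

theorem gsk_adj_permVertex_permVertex_iff {σ τ : Perm (Fin (k + 1))} :
    (Gsk 1 k).Adj (permVertex σ) (permVertex τ) ↔ (CayleyAdj k).Adj σ τ := by
  simp only [gsk_adj_permVertex_iff, cayleyAdj_iff, permVertex_injective.eq_iff]

theorem reachable_permVertex (σ : Perm (Fin (k + 1))) :
    (Gsk 1 k).Reachable (outVertex k) (permVertex σ) := by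
  induction σ using Submonoid.induction_of_closure_eq_top_right
    (Perm.mclosure_swap_castSucc_succ k) with
  | one => rw [permVertex_one]
  | mul_right σ s hs ih =>
    obtain ⟨p, rfl⟩ := hs
    exact ih.trans (gsk_adj_permVertex_iff.2 ⟨p, rfl⟩).reachable

theorem exists_permVertex_eq_of_reachable {v : GskVertex 1 k}
    (h : (Gsk 1 k).Reachable (outVertex k) v) : ∃ σ, permVertex σ = v := by
  rw [SimpleGraph.reachable_iff_reflTransGen] at h
  induction h with
  | refl => exact ⟨1, permVertex_one⟩
  | tail _ hadj ih =>
    obtain ⟨σ, rfl⟩ := ih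
    obtain ⟨p, rfl⟩ := gsk_adj_permVertex_iff.1 hadj
    exact ⟨_, rfl⟩

end Graph

theorem stmt7_general (k : ℕ) :
    Nonempty
      (((Gsk 1 k).induce {v : GskVertex 1 k | (Gsk 1 k).Reachable (outVertex k) v}) ≃g
        CayleyAdj k) := by
  let e : Perm (Fin (k + 1)) ≃ {v | (Gsk 1 k).Reachable (outVertex k) v} :=
    Equiv.ofBijective (fun σ => ⟨permVertex σ, reachable_permVertex σ⟩)
      ⟨fun _ _ h => permVertex_injective (congrArg Subtype.val h),
        fun ⟨_, hv⟩ => (exists_permVertex_eq_of_reachable hv).imp fun _ => Subtype.ext⟩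
  exact ⟨(⟨e, gsk_adj_permVertex_permVertex_iff⟩ : CayleyAdj k ≃g _).symm⟩

/-- The connected component of the out-vertex `(1, 2, …, k+1)` in `G_{1,k}` (as an induced
subgraph) is isomorphic to the Cayley graph of `S_{k+1}` with respect to the adjacent
transpositions. -/
theorem stmt7 (k : ℕ) (hk : 1 ≤ k) :
    Nonempty
      (((Gsk 1 k).induce {v : GskVertex 1 k | (Gsk 1 k).Reachable (outVertex k) v}) ≃g
        CayleyAdj k) :=
  stmt7_general k
end

section
/- In the graph G_{s,k}, if a vertex v = (i_0,...,i_k) is reached from an out-vertex (i_0^{out} < ··· < i_k^{out}) by a directed path, and for some pair of original positions p < q the entry originating at position p remains to the left of the entry originating at position q, then the current values satisfy i'_q - i'_p ≥ 1; consequently, v is an in-vertex if and only if, for every pair p < q, the entry originating at position p has been moved to the right of the entry originating at position q. -/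
/-!
For an entry `q`, count the entries of smaller origin that currently sit to its right, i.e.
those that `q` has jumped over; the value of `q` is then `i0 q` minus this count. This invariant
survives an edge because the entry moving left always jumps over an entry of smaller origin:
were the left neighbour `x` of larger origin than the right neighbour `y`, the count would give
`v y ≤ v x`, contradicting the edge condition. With the invariant, if `p < q` and `p` is still
left of `q`, every entry counted for `q` but not for `p` has origin strictly between `p` and
`q`, so `v q - v p ≥ (i0 q - i0 p) - (q - p - 1) ≥ 1`. This rules out a weakly decreasing
tuple with an uninverted pair, and when all pairs are inverted, adjacent slots hold entries
`y < x` with `y` right of `x`, where the count gives `v y ≤ v x`.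
-/

open Finset Equiv

theorem StrictMono.apply_add_sub_le {n : ℕ} {f : Fin (n + 1) → ℕ} (hf : StrictMono f)
    {p q : Fin (n + 1)} (hpq : p ≤ q) : f p + ((q : ℕ) - p) ≤ f q := by
  have hmono : Monotone fun j : Fin (n + 1) => (f j : ℤ) - j := by
    refine Fin.monotone_iff_le_succ.2 fun i => ?_
    have := Fin.strictMono_iff_lt_succ.1 hf i
    simp only [Fin.val_castSucc, Fin.val_succ]
    omega
  have hle : (f p : ℤ) - p ≤ f q - q := hmono hpq
  have hpq' : (p : ℕ) ≤ q := hpq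
  omega

theorem Fin.swap_castSucc_succ_lt_swap_iff {n : ℕ} {r : Fin n} {i j : Fin (n + 1)}
    (h : ¬(i = r.castSucc ∧ j = r.succ)) (h' : ¬(i = r.succ ∧ j = r.castSucc)) :
    swap r.castSucc r.succ i < swap r.castSucc r.succ j ↔ i < j := by
  simp only [swap_apply_def, Fin.lt_def]
  split_ifs <;> simp_all [Fin.ext_iff] <;> omega

namespace Equiv.Perm

variable {n : ℕ}

def smallerRight (σ : Perm (Fin n)) (q : Fin n) : Finset (Fin n) :=
  {x | x < q ∧ σ.symm q < σ.symm x}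

@[simp] theorem mem_smallerRight {σ : Perm (Fin n)} {q x : Fin n} :
    x ∈ σ.smallerRight q ↔ x < q ∧ σ.symm q < σ.symm x := by
  simp [smallerRight]

@[simp] theorem smallerRight_one (q : Fin n) : smallerRight 1 q = ∅ :=
  eq_empty_of_forall_notMem fun _ h => lt_asymm (mem_smallerRight.1 h).1 (mem_smallerRight.1 h).2

theorem card_smallerRight_le_of_lt_of_symm_lt (σ : Perm (Fin n)) {p q : Fin n} (hpq : p < q)
    (hσ : σ.symm p < σ.symm q) :
    #(σ.smallerRight q) ≤ #(σ.smallerRight p) + ((q : ℕ) - p - 1) := by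
  have hsub : σ.smallerRight q ⊆ σ.smallerRight p ∪ Ioo p q := by
    intro x hx
    rw [mem_smallerRight] at hx
    rw [mem_union, mem_smallerRight, mem_Ioo]
    rcases lt_trichotomy x p with h | rfl | h
    · exact Or.inl ⟨h, hσ.trans hx.2⟩
    · exact absurd (hσ.trans hx.2) (lt_irrefl _)
    · exact Or.inr ⟨h, hx.1⟩
  calc #(σ.smallerRight q) ≤ #(σ.smallerRight p ∪ Ioo p q) := card_le_card hsub
    _ ≤ #(σ.smallerRight p) + #(Ioo p q) := card_union_le _ _
    _ = _ := by rw [Fin.card_Ioo]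

theorem card_smallerRight_le_of_symm_eq_add_one (σ : Perm (Fin n)) {x y : Fin n}
    (hadj : (σ.symm y : ℕ) = σ.symm x + 1) :
    #(σ.smallerRight x) ≤ #(σ.smallerRight y) + ((x : ℕ) - y) := by
  have hsub : σ.smallerRight x ⊆ σ.smallerRight y ∪ Ico y x := by
    intro z hz
    rw [mem_smallerRight] at hz
    rw [mem_union, mem_smallerRight, mem_Ico]
    rcases lt_or_ge z y with h | h
    · have hne : σ.symm z ≠ σ.symm y := σ.symm.injective.ne h.ne
      have := hz.2
      rw [Fin.lt_def] at this ⊢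
      rw [ne_eq, Fin.ext_iff] at hne
      exact Or.inl ⟨h, by omega⟩
    · exact Or.inr ⟨h, hz.1⟩
  calc #(σ.smallerRight x) ≤ #(σ.smallerRight y ∪ Ico y x) := card_le_card hsub
    _ ≤ #(σ.smallerRight y) + #(Ico y x) := card_union_le _ _
    _ = _ := by rw [Fin.card_Ico]

theorem symm_mul_swap_apply {α : Type*} [DecidableEq α] (σ : Perm α) (a b x : α) :
    (σ * swap a b).symm x = swap a b (σ.symm x) := by
  simp [Perm.mul_def]

theorem smallerRight_mul_swap_of_ne (σ : Perm (Fin (n + 1))) {r : Fin n}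
    (hlt : σ r.castSucc < σ r.succ) {q : Fin (n + 1)} (hq : q ≠ σ r.succ) :
    (σ * swap r.castSucc r.succ).smallerRight q = σ.smallerRight q := by
  ext x
  simp only [mem_smallerRight, symm_mul_swap_apply]
  refine and_congr_right fun hxq => Fin.swap_castSucc_succ_lt_swap_iff ?_ ?_
  · rintro ⟨hq', hx'⟩
    rw [σ.symm_apply_eq] at hq' hx'
    subst hq' hx'
    exact lt_asymm hlt hxq
  · rintro ⟨hq', -⟩
    exact hq (σ.symm_apply_eq.1 hq')

theorem smallerRight_mul_swap_self (σ : Perm (Fin (n + 1))) {r : Fin n}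
    (hlt : σ r.castSucc < σ r.succ) :
    (σ * swap r.castSucc r.succ).smallerRight (σ r.succ) =
      insert (σ r.castSucc) (σ.smallerRight (σ r.succ)) := by
  ext x
  simp only [mem_insert, mem_smallerRight, symm_mul_swap_apply, symm_apply_apply]
  by_cases hx : x = σ r.castSucc
  · subst hx
    simp [hlt]
  · rw [Fin.swap_castSucc_succ_lt_swap_iff]
    · simp [hx]
    · exact fun h => Fin.castSucc_lt_succ.ne' h.1
    · rintro ⟨-, h⟩
      exact hx (σ.symm_apply_eq.1 h)

theorem card_smallerRight_mul_swap_self (σ : Perm (Fin (n + 1))) {r : Fin n}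
    (hlt : σ r.castSucc < σ r.succ) :
    #((σ * swap r.castSucc r.succ).smallerRight (σ r.succ)) =
      #(σ.smallerRight (σ r.succ)) + 1 := by
  rw [smallerRight_mul_swap_self σ hlt, card_insert_of_notMem]
  simp [(Fin.castSucc_lt_succ (i := r)).not_gt]

end Equiv.Perm

section TrackedValues

open Perm

variable {n : ℕ} {i0 : Fin (n + 1) → ℕ} {σ : Perm (Fin (n + 1))} {v : Fin (n + 1) → ℕ}

def TrackedValues (i0 : Fin (n + 1) → ℕ) (σ : Perm (Fin (n + 1))) (v : Fin (n + 1) → ℕ) :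
    Prop :=
  ∀ q, v q + #(σ.smallerRight q) = i0 q

theorem TrackedValues.one : TrackedValues i0 1 i0 := by
  simp [TrackedValues]

theorem TrackedValues.lt_of_lt_of_symm_lt (hi0 : StrictMono i0) (hv : TrackedValues i0 σ v)
    {p q : Fin (n + 1)} (hpq : p < q) (hσ : σ.symm p < σ.symm q) : v p < v q := by
  have hcard := σ.card_smallerRight_le_of_lt_of_symm_lt hpq hσ
  have hgap := hi0.apply_add_sub_le hpq.le
  have hpq' : (p : ℕ) < q := hpq
  have := hv p
  have := hv q
  omega

theorem TrackedValues.le_of_symm_eq_add_one (hi0 : StrictMono i0) (hv : TrackedValues i0 σ v)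
    {x y : Fin (n + 1)} (hyx : y < x) (hadj : (σ.symm y : ℕ) = σ.symm x + 1) : v y ≤ v x := by
  have hcard := σ.card_smallerRight_le_of_symm_eq_add_one hadj
  have hgap := hi0.apply_add_sub_le hyx.le
  have := hv x
  have := hv y
  omega

theorem TrackedValues.apply_castSucc_lt_apply_succ (hi0 : StrictMono i0)
    (hv : TrackedValues i0 σ v) {r : Fin n} (hlt : v (σ r.castSucc) < v (σ r.succ)) :
    σ r.castSucc < σ r.succ := by
  refine (σ.injective.ne Fin.castSucc_lt_succ.ne).lt_of_le (le_of_not_gt fun hgt => ?_)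
  exact (hv.le_of_symm_eq_add_one hi0 hgt (by simp)).not_gt hlt

theorem TrackedValues.mul_swap (hi0 : StrictMono i0) (hv : TrackedValues i0 σ v) {r : Fin n}
    (hlt : v (σ r.castSucc) < v (σ r.succ)) :
    TrackedValues i0 (σ * swap r.castSucc r.succ)
      (Function.update v (σ r.succ) (v (σ r.succ) - 1)) := by
  have hσ := hv.apply_castSucc_lt_apply_succ hi0 hlt
  intro q
  rcases eq_or_ne q (σ r.succ) with rfl | hq
  · rw [Function.update_self, σ.card_smallerRight_mul_swap_self hσ, ← hv]
    omega
  · rw [Function.update_of_ne hq, σ.smallerRight_mul_swap_of_ne hσ hq, hv]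

theorem TrackedValues.antitone_iff (hi0 : StrictMono i0) (hv : TrackedValues i0 σ v) :
    (∀ r : Fin n, v (σ r.succ) ≤ v (σ r.castSucc)) ↔
      ∀ p q : Fin (n + 1), p < q → σ.symm q < σ.symm p := by
  constructor
  · intro hdec p q hpq
    by_contra! hle
    have hlt := hle.lt_of_ne (σ.symm.injective.ne hpq.ne)
    have hanti := (Fin.antitone_iff_succ_le (f := v ∘ σ)).2 hdec hlt.le
    simp only [Function.comp_apply, apply_symm_apply] at hanti
    exact (hv.lt_of_lt_of_symm_lt hi0 hpq hlt).not_ge hanti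
  · intro hinv r
    rcases lt_or_gt_of_ne (σ.injective.ne (Fin.castSucc_lt_succ (i := r)).ne) with h | h
    · have := hinv _ _ h
      simp only [symm_apply_apply] at this
      exact absurd this Fin.castSucc_lt_succ.not_gt
    · exact hv.le_of_symm_eq_add_one hi0 h (by simp)

end TrackedValues

theorem trackedValues_of_path {n m : ℕ} {i0 : Fin (n + 1) → ℕ} (hi0 : StrictMono i0)
    {π : ℕ → Perm (Fin (n + 1))} {val : ℕ → Fin (n + 1) → ℕ} (hπ0 : π 0 = 1)
    (hval0 : val 0 = i0)
    (hstep : ∀ t < m, ∃ r : Fin n, val t (π t r.castSucc) < val t (π t r.succ) ∧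
      π (t + 1) = π t * swap r.castSucc r.succ ∧
      val (t + 1) = Function.update (val t) (π t r.succ) (val t (π t r.succ) - 1)) :
    ∀ t ≤ m, TrackedValues i0 (π t) (val t) := by
  intro t
  induction t with
  | zero =>
    intro _
    rw [hπ0, hval0]
    exact TrackedValues.one
  | succ t ih =>
    intro ht
    obtain ⟨r, hlt, hπ, hval⟩ := hstep t ht
    rw [hπ, hval]
    exact (ih (Nat.le_of_succ_le ht)).mul_swap hi0 hlt

theorem stmt19_general (k : ℕ) (m : ℕ)
    (π : ℕ → Equiv.Perm (Fin (k + 1))) (val : ℕ → Fin (k + 1) → ℕ)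
    (i0 : Fin (k + 1) → ℕ) (hi0 : StrictMono i0)
    (hπ0 : π 0 = 1) (hval0 : val 0 = i0)
    (hstep : ∀ t < m, ∃ p : Fin k,
      val t (π t p.castSucc) < val t (π t p.succ) ∧
      π (t + 1) = π t * Equiv.swap p.castSucc p.succ ∧
      val (t + 1) = Function.update (val t) (π t p.succ) (val t (π t p.succ) - 1)) :
    (∀ p q : Fin (k + 1), p < q → (π m).symm p < (π m).symm q → val m p < val m q) ∧
    ((∀ r : Fin k, val m (π m r.succ) ≤ val m (π m r.castSucc)) ↔
      ∀ p q : Fin (k + 1), p < q → (π m).symm q < (π m).symm p) := by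
  have hv := trackedValues_of_path hi0 hπ0 hval0 hstep m le_rfl
  exact ⟨fun _ _ => hv.lt_of_lt_of_symm_lt hi0, hv.antitone_iff hi0⟩

/-- Tracking the entries of an out-vertex of `G_{s,k}` along a directed path: states are
pairs of a placement permutation `π t` (sending each slot to the original position of the
entry currently occupying it) and a value function `val t` (the current value of each
tracked entry).  A directed edge at slot `p` requires the value at slot `p` to be less
than the value at slot `p+1`, swaps the two entries, and decrements by one the value of
the entry that moves left.  Then: (1) if the entry originating at position `p` is still to
the left of the one originating at position `q > p`, their current values satisfy
`i'_q - i'_p ≥ 1`; consequently (2) the current tuple is an in-vertex (weakly decreasing)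
iff for every pair `p < q` the entry from `p` has been moved to the right of the entry
from `q`. -/
theorem stmt19 (s k : ℕ) (hs : 1 ≤ s) (hk : 1 ≤ k) (m : ℕ)
    (π : ℕ → Equiv.Perm (Fin (k + 1))) (val : ℕ → Fin (k + 1) → ℕ)
    (i0 : Fin (k + 1) → ℕ) (hi0 : StrictMono i0)
    (hbd : ∀ j : Fin (k + 1), i0 j ≤ s + (j : ℕ))
    (hπ0 : π 0 = 1) (hval0 : val 0 = i0)
    (hstep : ∀ t < m, ∃ p : Fin k,
      val t (π t p.castSucc) < val t (π t p.succ) ∧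
      π (t + 1) = π t * Equiv.swap p.castSucc p.succ ∧
      val (t + 1) = Function.update (val t) (π t p.succ) (val t (π t p.succ) - 1)) :
    (∀ p q : Fin (k + 1), p < q → (π m).symm p < (π m).symm q → val m p < val m q) ∧
    ((∀ r : Fin k, val m (π m r.succ) ≤ val m (π m r.castSucc)) ↔
      ∀ p q : Fin (k + 1), p < q → (π m).symm q < (π m).symm p) :=
  stmt19_general k m π val i0 hi0 hπ0 hval0 hstep
end
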